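/- Let G be a finite simple graph on n vertices with ppt(G) = n − 3 and γ_P(G) ∈ {2,3} (where ppt = ppt_1 and γ_P = γ_{P,1}). Then G is isomorphic to one of: the empty graph on 3 vertices, the disjoint union of the empty graph on 2 vertices with K_2, K_1 ⊔ C_3, K_1 ⊔ P_3, K_1 ⊔ P_4, K_1 ⊔ C_4, or K_2 ⊔ K_2. -/

import Mathlib

namespace PowerProp

open SimpleGraph

variable {V : Type*} {α β : Type*}

/-- The closed neighborhood `N[S]` of a set of vertices. -/
def closedNbhd (G : SimpleGraph V) (S : Set V) : Set V :=
  S ∪ ⋃ v ∈ S, G.neighborSet v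

/-- One propagation step of the `k`-power domination process. -/
def propStep (k : ℕ) (G : SimpleGraph V) (S : Set V) : Set V :=
  S ∪ {w | ∃ v ∈ S, w ∈ G.neighborSet v \ S ∧ (G.neighborSet v \ S).ncard ≤ k}

/-- `S^[t]`: the set observed after `t` steps (step 1 is the domination step). -/
def powerIter (k : ℕ) (G : SimpleGraph V) (S : Set V) : ℕ → Set V
  | 0 => S
  | 1 => closedNbhd G S
  | (t + 2) => propStep k G (powerIter k G S (t + 1))

/-- `S` is a `k`-power dominating set of `G`. -/
def IsPDS (k : ℕ) (G : SimpleGraph V) (S : Set V) : Prop :=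
  ∃ l, powerIter k G S l = Set.univ

/-- The `k`-power domination number `γ_{P,k}(G)`. -/
noncomputable def pdNum (k : ℕ) (G : SimpleGraph V) : ℕ :=
  sInf {n | ∃ S : Set V, S.ncard = n ∧ IsPDS k G S}

/-- `S` is a minimum `k`-power dominating set of `G`. -/
def IsMinPDS (k : ℕ) (G : SimpleGraph V) (S : Set V) : Prop :=
  IsPDS k G S ∧ S.ncard = pdNum k G

/-- `ppt_k(G,S)`, the `k`-power propagation time of `G` with `S`. -/
noncomputable def pptOf (k : ℕ) (G : SimpleGraph V) (S : Set V) : ℕ :=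
  sInf {l | powerIter k G S l = Set.univ}

/-- `ppt_k(G)`, the (minimum) `k`-power propagation time of `G`. -/
noncomputable def ppt (k : ℕ) (G : SimpleGraph V) : ℕ :=
  sInf {t | ∃ S : Set V, IsMinPDS k G S ∧ pptOf k G S = t}

end PowerProp

/-!
Let `S` be a minimum power dominating set realising `r = ppt(G)`. Every step of its process
observes a new vertex, and if `r ≥ 2` the domination step observes at least two: otherwise,
trading the neighbour in `S` of the only new vertex `x` for `x` gives a set of the same size
that finishes one step earlier. Hence `|V| ≥ γ_P + r + 1`, so for `|V| = r + 3` either `r ≤ 1`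
and `G` has at most four vertices, or `r ≥ 2`, `γ_P = 2` and every later step observes exactly
one vertex. The same exchange principle (no set of size `γ_P` may run one step ahead of `S`)
then determines every adjacency; for `r ≥ 2` it leaves an isolated vertex and forces `r = 2`.
-/

namespace PowerProp

open SimpleGraph

section Propagation

variable {V : Type*} {k t : ℕ} {G : SimpleGraph V} {S T A B : Set V} {u v w : V}

lemma mem_closedNbhd_iff : w ∈ closedNbhd G S ↔ w ∈ S ∨ ∃ v ∈ S, G.Adj v w := by
  simp [closedNbhd]

lemma propStep_subset_closedNbhd : propStep k G A ⊆ closedNbhd G A := by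
  rintro w (hw | ⟨v, hv, hvw, -⟩)
  exacts [Or.inl hw, mem_closedNbhd_iff.2 (Or.inr ⟨v, hv, hvw.1⟩)]

lemma propStep_mono [Finite V] (h : A ⊆ B) : propStep k G A ⊆ propStep k G B := by
  rintro w (hw | ⟨v, hv, hvw, hcard⟩)
  · exact Or.inl (h hw)
  by_cases hwB : w ∈ B
  · exact Or.inl hwB
  exact Or.inr ⟨v, h hv, ⟨hvw.1, hwB⟩,
    (Set.ncard_le_ncard (Set.sdiff_subset_sdiff_right h)).trans hcard⟩

lemma mem_powerIter_one_iff : w ∈ powerIter k G S 1 ↔ w ∈ S ∨ ∃ v ∈ S, G.Adj v w :=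
  mem_closedNbhd_iff

lemma powerIter_succ (ht : t ≠ 0) :
    powerIter k G S (t + 1) = propStep k G (powerIter k G S t) := by
  obtain ⟨t, rfl⟩ := Nat.exists_eq_succ_of_ne_zero ht
  rfl

lemma powerIter_subset_succ (t : ℕ) : powerIter k G S t ⊆ powerIter k G S (t + 1) := by
  cases t
  exacts [Set.subset_union_left, Set.subset_union_left]

lemma subset_powerIter_one : S ⊆ powerIter k G S 1 :=
  powerIter_subset_succ 0

lemma mem_powerIter_one_of_adj (hv : v ∈ S) (hvw : G.Adj v w) : w ∈ powerIter k G S 1 :=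
  mem_powerIter_one_iff.2 (Or.inr ⟨v, hv, hvw⟩)

lemma mem_powerIter_succ_of_forces (ht : t ≠ 0) (hk : 1 ≤ k) (hv : v ∈ powerIter k G S t)
    (hvw : G.Adj v w) (hforce : ∀ u, G.Adj v u → u ∉ powerIter k G S t → u = w) :
    w ∈ powerIter k G S (t + 1) := by
  rw [powerIter_succ ht]
  by_cases hw : w ∈ powerIter k G S t
  · exact Or.inl hw
  refine Or.inr ⟨v, hv, ⟨hvw, hw⟩, le_trans ?_ hk⟩
  exact (Set.ncard_le_ncard (t := {w}) (fun u hu ↦ hforce u hu.1 hu.2)).trans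
    (Set.ncard_singleton w).le

lemma exists_forces_of_mem_powerIter_succ [Finite V] (ht : t ≠ 0)
    (hw : w ∈ powerIter 1 G S (t + 1)) (hw' : w ∉ powerIter 1 G S t) :
    ∃ v ∈ powerIter 1 G S t, G.Adj v w ∧ ∀ u, G.Adj v u → u ∉ powerIter 1 G S t → u = w := by
  rw [powerIter_succ ht] at hw
  obtain hw | ⟨v, hv, hvw, hcard⟩ := hw
  · exact absurd hw hw'
  exact ⟨v, hv, hvw.1, fun u hu hu' ↦ (Set.ncard_le_one).1 hcard u ⟨hu, hu'⟩ w hvw⟩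

lemma adj_of_forces_of_notMem [Finite V] {x : V} (ht : t ≠ 0) (hv : v ∈ powerIter 1 G S t)
    (hvw : G.Adj v w) (hw : w ∉ powerIter 1 G S (t + 1))
    (hx : powerIter 1 G S (t + 1) = insert x (powerIter 1 G S t))
    (hforce : ∀ u, G.Adj v u → u ∉ powerIter 1 G S (t + 1) → u = w) : G.Adj v x := by
  by_contra hvx
  refine hw (mem_powerIter_succ_of_forces ht le_rfl hv hvw fun u hu hu' ↦ hforce u hu ?_)
  rw [hx]
  rintro (rfl | h)
  exacts [hvx hu, hu' h]

lemma powerIter_succ_subset_of_subset [Finite V] {m : ℕ} (hm : m ≠ 0)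
    (h : powerIter k G S (m + 1) ⊆ powerIter k G T m) (ht : m ≤ t) :
    powerIter k G S (t + 1) ⊆ powerIter k G T t := by
  induction t, ht using Nat.le_induction with
  | base => exact h
  | succ t hmt ih =>
    rw [powerIter_succ (by omega), powerIter_succ (S := T) (by omega)]
    exact propStep_mono ih

lemma powerIter_succ_succ_eq (h : powerIter k G S (t + 1) = powerIter k G S t) :
    powerIter k G S (t + 2) = powerIter k G S (t + 1) := by
  refine Set.Subset.antisymm ?_ (powerIter_subset_succ _)
  cases t with
  | zero =>
    have h' : closedNbhd G S = S := h
    calc powerIter k G S 2 = propStep k G (closedNbhd G S) := rfl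
      _ = propStep k G S := by rw [h']
      _ ⊆ closedNbhd G S := propStep_subset_closedNbhd
  | succ t =>
    calc powerIter k G S (t + 1 + 2) = propStep k G (powerIter k G S (t + 1 + 1)) :=
          powerIter_succ (by omega)
      _ = propStep k G (powerIter k G S (t + 1)) := by rw [h]
      _ = powerIter k G S (t + 1 + 1) := (powerIter_succ (by omega)).symm
      _ ⊆ _ := le_rfl

lemma powerIter_two_eq_univ (hk : 1 ≤ k) (hT : ∀ u, u ≠ w → u ∈ powerIter k G T 1)
    (hvw : G.Adj v w) : powerIter k G T 2 = Set.univ := by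
  refine Set.eq_univ_of_forall fun u ↦ ?_
  by_cases hu : u = w
  · subst hu
    exact mem_powerIter_succ_of_forces one_ne_zero hk (hT v hvw.ne) hvw
      fun x _ hx ↦ by_contra fun h ↦ hx (hT x h)
  · exact powerIter_subset_succ 1 (hT u hu)

end Propagation

section Time

variable {V : Type*} {k t : ℕ} {G : SimpleGraph V} {S T : Set V}

lemma IsPDS.powerIter_pptOf (h : IsPDS k G S) : powerIter k G S (pptOf k G S) = Set.univ :=
  Nat.sInf_mem h

lemma pptOf_le (h : powerIter k G S t = Set.univ) : pptOf k G S ≤ t :=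
  Nat.sInf_le h

lemma pdNum_le_ncard (h : IsPDS k G S) : pdNum k G ≤ S.ncard :=
  Nat.sInf_le ⟨S, rfl, h⟩

lemma ppt_le_pptOf (h : IsMinPDS k G S) : ppt k G ≤ pptOf k G S :=
  Nat.sInf_le ⟨S, h, rfl⟩

def IsOptimalPDS (k : ℕ) (G : SimpleGraph V) (S : Set V) : Prop :=
  IsMinPDS k G S ∧ pptOf k G S = ppt k G

lemma exists_isOptimalPDS (k : ℕ) (G : SimpleGraph V) : ∃ S, IsOptimalPDS k G S := by
  have hne : {n | ∃ S : Set V, S.ncard = n ∧ IsPDS k G S}.Nonempty :=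
    ⟨_, Set.univ, rfl, 0, rfl⟩
  obtain ⟨S, hcard, hS⟩ := Nat.sInf_mem hne
  have hne' : {t | ∃ S : Set V, IsMinPDS k G S ∧ pptOf k G S = t}.Nonempty :=
    ⟨_, S, ⟨hS, hcard⟩, rfl⟩
  exact Nat.sInf_mem hne'

lemma IsOptimalPDS.powerIter_ppt (hS : IsOptimalPDS k G S) :
    powerIter k G S (ppt k G) = Set.univ :=
  hS.2 ▸ hS.1.1.powerIter_pptOf

lemma powerIter_eq_of_succ_eq (h : powerIter k G S (t + 1) = powerIter k G S t) {s : ℕ}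
    (hs : t ≤ s) : powerIter k G S s = powerIter k G S t := by
  have hstep : ∀ s, t ≤ s → powerIter k G S (s + 1) = powerIter k G S s := fun s hs ↦ by
    induction s, hs using Nat.le_induction with
    | base => exact h
    | succ s _ ih => exact powerIter_succ_succ_eq ih
  induction s, hs using Nat.le_induction with
  | base => rfl
  | succ s hts ih => exact (hstep s hts).trans ih

lemma IsPDS.powerIter_ssubset_succ (hS : IsPDS k G S) (ht : t < pptOf k G S) :
    powerIter k G S t ⊂ powerIter k G S (t + 1) := by
  refine (powerIter_subset_succ t).ssubset_of_ne fun h ↦ ?_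
  have huniv : powerIter k G S t = Set.univ :=
    (powerIter_eq_of_succ_eq h.symm ht.le).symm.trans hS.powerIter_pptOf
  exact absurd (pptOf_le huniv) (by omega)

lemma IsPDS.ncard_add_le_ncard_powerIter [Finite V] (hS : IsPDS k G S) {t t' : ℕ}
    (htt' : t ≤ t') (ht' : t' ≤ pptOf k G S) :
    (powerIter k G S t).ncard + (t' - t) ≤ (powerIter k G S t').ncard := by
  induction t', htt' using Nat.le_induction with
  | base => simp
  | succ t' htt' ih =>
    have := Set.ncard_lt_ncard (hS.powerIter_ssubset_succ (t := t') (by omega))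
    have := ih (by omega)
    omega

/-- Exchange argument: otherwise `T` would be a minimum power dominating set done by time
`ppt k G - 1`. -/
lemma IsOptimalPDS.not_powerIter_succ_subset [Finite V] (hS : IsOptimalPDS k G S)
    (hT : T.ncard = S.ncard) {m : ℕ} (hm : m ≠ 0) (hmr : m < ppt k G) :
    ¬ powerIter k G S (m + 1) ⊆ powerIter k G T m := by
  intro h
  have hTuniv : powerIter k G T (ppt k G - 1) = Set.univ := by
    have := powerIter_succ_subset_of_subset hm h (t := ppt k G - 1) (by omega)
    rwa [Nat.sub_add_cancel (by omega), hS.powerIter_ppt, Set.univ_subset_iff] at this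
  have := ppt_le_pptOf ⟨⟨_, hTuniv⟩, hT.trans hS.1.2⟩
  have := pptOf_le hTuniv
  omega

/-- Otherwise trading the neighbour in `S` of the only newly observed vertex `x` for `x` would
gain a step. -/
lemma IsOptimalPDS.ncard_add_two_le [Finite V] (hS : IsOptimalPDS k G S) (hr : 2 ≤ ppt k G) :
    S.ncard + 2 ≤ (powerIter k G S 1).ncard := by
  have h1 : S.ncard + 1 ≤ (powerIter k G S 1).ncard :=
    hS.1.1.ncard_add_le_ncard_powerIter zero_le_one (by rw [hS.2]; omega)
  by_contra hlt
  obtain ⟨x, hxS, hx⟩ : ∃ x ∉ S, insert x S = powerIter k G S 1 :=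
    (Set.exists_eq_insert_iff_ncard).2 ⟨powerIter_subset_succ 0, by omega⟩
  obtain ⟨s, hs, hsx⟩ : ∃ s ∈ S, G.Adj s x :=
    (mem_powerIter_one_iff.1 (hx ▸ Set.mem_insert x S)).resolve_left hxS
  set T := insert x (S \ {s})
  have hxT : x ∈ T := Set.mem_insert x _
  have hST : powerIter k G S 1 ⊆ powerIter k G T 1 := by
    rw [← hx]
    rintro y (rfl | hy)
    · exact subset_powerIter_one hxT
    by_cases hys : y = s
    · exact mem_powerIter_one_of_adj hxT (hys ▸ hsx.symm)
    · exact subset_powerIter_one (Set.mem_insert_of_mem x ⟨hy, hys⟩)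
  refine hS.not_powerIter_succ_subset (T := T) ?_ one_ne_zero (by omega) fun y hy ↦ ?_
  · rw [Set.ncard_insert_of_notMem (fun h ↦ hxS h.1), Set.ncard_sdiff_singleton_add_one hs]
  rw [powerIter_succ one_ne_zero] at hy
  obtain hy | ⟨v, hv, hvy⟩ := mem_closedNbhd_iff.1 (propStep_subset_closedNbhd hy)
  · exact hST hy
  rw [← hx] at hv
  obtain rfl | hv := hv
  · exact mem_powerIter_one_of_adj hxT hvy
  · exact hST (mem_powerIter_one_of_adj hv hvy)

lemma IsOptimalPDS.ncard_add_ppt_lt_card [Finite V] (hS : IsOptimalPDS k G S)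
    (hr : 2 ≤ ppt k G) : S.ncard + ppt k G < Nat.card V := by
  have h1 := hS.ncard_add_two_le hr
  have h := hS.1.1.ncard_add_le_ncard_powerIter (t := 1) (by rw [hS.2]; omega) le_rfl
  rw [hS.1.1.powerIter_pptOf, Set.ncard_univ, hS.2] at h
  omega

lemma IsOptimalPDS.ncard_powerIter_eq [Finite V] (hS : IsOptimalPDS k G S) (hr : 2 ≤ ppt k G)
    (hV : Nat.card V = S.ncard + ppt k G + 1) (ht : 1 ≤ t) (htr : t ≤ ppt k G) :
    (powerIter k G S t).ncard = S.ncard + t + 1 := by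
  have h1 := hS.ncard_add_two_le hr
  have hlow := hS.1.1.ncard_add_le_ncard_powerIter ht (htr.trans_eq hS.2.symm)
  have hup := hS.1.1.ncard_add_le_ncard_powerIter (htr.trans_eq hS.2.symm) le_rfl
  rw [hS.1.1.powerIter_pptOf, Set.ncard_univ, hS.2] at hup
  omega

lemma pdNum_lt_card_of_adj [Finite V] {u v : V} (h : G.Adj u v) : pdNum k G < Nat.card V := by
  have hdom : powerIter k G (Set.univ \ {v}) 1 = Set.univ := by
    refine Set.eq_univ_of_forall fun y ↦ mem_powerIter_one_iff.2 ?_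
    by_cases hy : y = v
    · exact Or.inr ⟨u, ⟨trivial, h.ne⟩, hy ▸ h⟩
    · exact Or.inl ⟨trivial, hy⟩
  have := pdNum_le_ncard ⟨1, hdom⟩
  have := Set.ncard_sdiff_singleton_add_one (Set.mem_univ v)
  rw [Set.ncard_univ] at this
  omega

lemma IsOptimalPDS.not_adj_of_ppt_eq_zero [Finite V] (hS : IsOptimalPDS k G S) (h0 : ppt k G = 0)
    (u v : V) : ¬ G.Adj u v := fun h ↦ by
  have hS' : S = Set.univ := by rw [← hS.powerIter_ppt, h0]; rfl
  have := pdNum_lt_card_of_adj (k := k) h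
  rw [← hS.1.2, hS', Set.ncard_univ] at this
  exact lt_irrefl _ this

end Time

section Isomorphisms

variable {V : Type*} [Fintype V] {G : SimpleGraph V}

lemma nonempty_iso_bot_of_forall_not_adj (hV : Fintype.card V = 3) (h : ∀ u v, ¬ G.Adj u v) :
    Nonempty (G ≃g (⊥ : SimpleGraph (Fin 3))) :=
  ⟨⟨Fintype.equivFinOfCardEq hV, by simp [h]⟩⟩

lemma nonempty_iso_sum_of_nodup {m n : ℕ} {H : SimpleGraph (Fin m ⊕ Fin n)}
    (hV : Fintype.card V = m + n) (f : Fin m → V) (g : Fin n → V)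
    (hd : (List.ofFn f ++ List.ofFn g).Nodup)
    (hadj : ∀ i j, G.Adj (Sum.elim f g i) (Sum.elim f g j) ↔ H.Adj i j) :
    Nonempty (G ≃g H) := by
  rw [List.nodup_append, List.nodup_ofFn, List.nodup_ofFn] at hd
  have hinj : (Sum.elim f g).Injective :=
    hd.1.sumElim hd.2.1 fun i j ↦ hd.2.2 _ (List.mem_ofFn.2 ⟨i, rfl⟩) _ (List.mem_ofFn.2 ⟨j, rfl⟩)
  have hbij : (Sum.elim f g).Bijective :=
    (Fintype.bijective_iff_injective_and_card _).2 ⟨hinj, by simp [hV]⟩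
  exact ⟨(⟨Equiv.ofBijective _ hbij, hadj _ _⟩ : H ≃g G).symm⟩

lemma nonempty_iso_bot_sum_K2 (hV : Fintype.card V = 4) {s₀ s₁ u v : V}
    (hd : [s₀, s₁, u, v].Nodup) (hs₀ : ∀ y, ¬ G.Adj s₀ y) (hs₁ : ∀ y, ¬ G.Adj s₁ y)
    (huv : G.Adj u v) :
    Nonempty (G ≃g (⊥ : SimpleGraph (Fin 2)) ⊕g completeGraph (Fin 2)) :=
  nonempty_iso_sum_of_nodup hV ![s₀, s₁] ![u, v] (by simpa using hd) (by
    rintro (i | i) (j | j) <;> fin_cases i <;> fin_cases j <;> simp_all [G.adj_comm])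

lemma nonempty_iso_K1_sum_cycleGraph_three (hV : Fintype.card V = 4) {w p₀ p₁ p₂ : V}
    (hd : [w, p₀, p₁, p₂].Nodup) (hw : ∀ y, ¬ G.Adj w y)
    (h01 : G.Adj p₀ p₁) (h12 : G.Adj p₁ p₂) (h20 : G.Adj p₂ p₀) :
    Nonempty (G ≃g completeGraph (Fin 1) ⊕g cycleGraph 3) :=
  nonempty_iso_sum_of_nodup hV ![w] ![p₀, p₁, p₂] (by simpa using hd) (by
    rintro (i | i) (j | j) <;> fin_cases i <;> fin_cases j <;>
      simp_all [cycleGraph_adj, G.adj_comm] <;> decide)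

lemma nonempty_iso_K1_sum_pathGraph_three (hV : Fintype.card V = 4) {w p₀ p₁ p₂ : V}
    (hd : [w, p₀, p₁, p₂].Nodup) (hw : ∀ y, ¬ G.Adj w y)
    (h01 : G.Adj p₀ p₁) (h12 : G.Adj p₁ p₂) (h02 : ¬ G.Adj p₀ p₂) :
    Nonempty (G ≃g completeGraph (Fin 1) ⊕g pathGraph 3) :=
  nonempty_iso_sum_of_nodup hV ![w] ![p₀, p₁, p₂] (by simpa using hd) (by
    rintro (i | i) (j | j) <;> fin_cases i <;> fin_cases j <;>
      simp_all [pathGraph_adj, G.adj_comm])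

lemma nonempty_iso_K2_sum_K2 (hV : Fintype.card V = 4) {a₀ a₁ b₀ b₁ : V}
    (hd : [a₀, a₁, b₀, b₁].Nodup) (ha : G.Adj a₀ a₁) (hb : G.Adj b₀ b₁)
    (h00 : ¬ G.Adj a₀ b₀) (h01 : ¬ G.Adj a₀ b₁) (h10 : ¬ G.Adj a₁ b₀) (h11 : ¬ G.Adj a₁ b₁) :
    Nonempty (G ≃g completeGraph (Fin 2) ⊕g completeGraph (Fin 2)) :=
  nonempty_iso_sum_of_nodup hV ![a₀, a₁] ![b₀, b₁] (by simpa using hd) (by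
    rintro (i | i) (j | j) <;> fin_cases i <;> fin_cases j <;> simp_all [G.adj_comm])

lemma nonempty_iso_K1_sum_pathGraph_four (hV : Fintype.card V = 5) {w p₀ p₁ p₂ p₃ : V}
    (hd : [w, p₀, p₁, p₂, p₃].Nodup) (hw : ∀ y, ¬ G.Adj w y)
    (h01 : G.Adj p₀ p₁) (h12 : G.Adj p₁ p₂) (h23 : G.Adj p₂ p₃)
    (h02 : ¬ G.Adj p₀ p₂) (h03 : ¬ G.Adj p₀ p₃) (h13 : ¬ G.Adj p₁ p₃) :
    Nonempty (G ≃g completeGraph (Fin 1) ⊕g pathGraph 4) :=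
  nonempty_iso_sum_of_nodup hV ![w] ![p₀, p₁, p₂, p₃] (by simpa using hd) (by
    rintro (i | i) (j | j) <;> fin_cases i <;> fin_cases j <;>
      simp_all [pathGraph_adj, G.adj_comm])

lemma nonempty_iso_K1_sum_cycleGraph_four (hV : Fintype.card V = 5) {w p₀ p₁ p₂ p₃ : V}
    (hd : [w, p₀, p₁, p₂, p₃].Nodup) (hw : ∀ y, ¬ G.Adj w y)
    (h01 : G.Adj p₀ p₁) (h12 : G.Adj p₁ p₂) (h23 : G.Adj p₂ p₃) (h30 : G.Adj p₃ p₀)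
    (h02 : ¬ G.Adj p₀ p₂) (h13 : ¬ G.Adj p₁ p₃) :
    Nonempty (G ≃g completeGraph (Fin 1) ⊕g cycleGraph 4) :=
  nonempty_iso_sum_of_nodup hV ![w] ![p₀, p₁, p₂, p₃] (by simpa using hd) (by
    rintro (i | i) (j | j) <;> fin_cases i <;> fin_cases j <;>
      simp_all [cycleGraph_adj, G.adj_comm] <;> decide)

end Isomorphisms

section FourVertices

variable {V : Type*} {G : SimpleGraph V} {u v w p q s s' : V}

lemma exists_nodup_of_card_eq_four [Fintype V] (hV : Fintype.card V = 4) (huv : u ≠ v) :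
    ∃ x y, [u, v, x, y].Nodup ∧ ∀ z, z = u ∨ z = v ∨ z = x ∨ z = y := by
  classical
  have hcard : ({u, v}ᶜ : Finset V).card = 2 := by
    rw [Finset.card_compl, Finset.card_pair huv, hV]
  obtain ⟨x, y, hxy, hxy'⟩ := Finset.card_eq_two.1 hcard
  have hx : x ∈ ({u, v}ᶜ : Finset V) := hxy' ▸ by simp
  have hy : y ∈ ({u, v}ᶜ : Finset V) := hxy' ▸ by simp
  simp only [Finset.mem_compl, Finset.mem_insert, Finset.mem_singleton, not_or] at hx hy
  refine ⟨x, y, by simp [*, Ne.symm], fun z ↦ ?_⟩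
  by_cases hz : z ∈ ({u, v} : Finset V)
  · simp only [Finset.mem_insert, Finset.mem_singleton] at hz
    tauto
  · rw [← Finset.mem_compl, hxy'] at hz
    simp only [Finset.mem_insert, Finset.mem_singleton] at hz
    tauto

lemma ncard_pair_le (a b : V) : ({a, b} : Set V).ncard ≤ 2 :=
  (Set.ncard_insert_le a {b}).trans (by simp)

lemma not_adj_of_three_le_pdNum (hγ : 3 ≤ pdNum 1 G)
    (hV : ∀ z, z = u ∨ z = v ∨ z = s ∨ z = s') (huv : G.Adj u v) (y : V) : ¬ G.Adj s y := by
  intro hsy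
  suffices ∃ T : Set V, T.ncard ≤ 2 ∧ IsPDS 1 G T by
    obtain ⟨T, hT, hpds⟩ := this
    exact absurd ((pdNum_le_ncard hpds).trans hT) (by omega)
  rcases hV y with rfl | rfl | rfl | rfl
  · refine ⟨{s, s'}, ncard_pair_le s s', 2, powerIter_two_eq_univ le_rfl (w := v) ?_ huv⟩
    intro z hz
    rcases hV z with rfl | rfl | rfl | rfl <;> simp_all [mem_powerIter_one_iff]
  · refine ⟨{s, s'}, ncard_pair_le s s', 2, powerIter_two_eq_univ le_rfl (w := u) ?_ huv.symm⟩
    intro z hz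
    rcases hV z with rfl | rfl | rfl | rfl <;> simp_all [mem_powerIter_one_iff]
  · exact (hsy.ne rfl).elim
  · refine ⟨{u, s}, ncard_pair_le u s, 1, Set.eq_univ_of_forall fun z ↦ ?_⟩
    rcases hV z with rfl | rfl | rfl | rfl <;> simp_all [mem_powerIter_one_iff]

/-- Otherwise `{v}` would power dominate in two steps. -/
lemma not_adj_of_two_le_pdNum (hγ : 2 ≤ pdNum 1 G)
    (hV : ∀ z, z = v ∨ z = p ∨ z = q ∨ z = w) (hp : G.Adj v p) (hq : G.Adj v q) (y : V) :
    ¬ G.Adj w y := by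
  intro hwy
  have hT : ∀ z, z ≠ w → z ∈ powerIter 1 G {v} 1 := by
    intro z hz
    rcases hV z with rfl | rfl | rfl | rfl <;> simp_all [mem_powerIter_one_iff]
  have := pdNum_le_ncard ⟨2, powerIter_two_eq_univ le_rfl hT hwy.symm⟩
  rw [Set.ncard_singleton] at this
  omega

lemma nonempty_iso_of_adj_of_adj [Fintype V] (hV : Fintype.card V = 4) (hγ : 2 ≤ pdNum 1 G)
    (hd : [w, v, p, q].Nodup) (hall : ∀ z, z = v ∨ z = p ∨ z = q ∨ z = w)
    (hp : G.Adj v p) (hq : G.Adj v q) :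
    Nonempty (G ≃g completeGraph (Fin 1) ⊕g cycleGraph 3) ∨
      Nonempty (G ≃g completeGraph (Fin 1) ⊕g pathGraph 3) := by
  have hw := not_adj_of_two_le_pdNum hγ hall hp hq
  by_cases hpq : G.Adj p q
  · exact Or.inl (nonempty_iso_K1_sum_cycleGraph_three hV hd hw hp hpq hq.symm)
  · refine Or.inr (nonempty_iso_K1_sum_pathGraph_three hV ?_ hw hp.symm hq hpq)
    simp only [List.nodup_cons, List.mem_cons, List.not_mem_nil] at hd ⊢
    tauto

lemma nonempty_iso_K2_sum_K2_of_adj_of_adj [Fintype V] (hV : Fintype.card V = 4)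
    (hγ : 2 ≤ pdNum 1 G) {a x b y : V} (hd : [a, x, b, y].Nodup)
    (hall : ∀ z, z = a ∨ z = x ∨ z = b ∨ z = y)
    (hax : G.Adj a x) (hby : G.Adj b y) :
    Nonempty (G ≃g completeGraph (Fin 2) ⊕g completeGraph (Fin 2)) := by
  refine nonempty_iso_K2_sum_K2 hV hd hax hby (fun hab ↦ ?_) (fun hay ↦ ?_) (fun hxb ↦ ?_)
    (fun hxy ↦ ?_)
  · refine not_adj_of_two_le_pdNum hγ (fun z ↦ ?_) hax hab b hby.symm
    rcases hall z with rfl | rfl | rfl | rfl <;> simp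
  · refine not_adj_of_two_le_pdNum hγ (fun z ↦ ?_) hax hay y hby
    rcases hall z with rfl | rfl | rfl | rfl <;> simp
  · refine not_adj_of_two_le_pdNum hγ (fun z ↦ ?_) hby hxb.symm x hax
    rcases hall z with rfl | rfl | rfl | rfl <;> simp
  · refine not_adj_of_two_le_pdNum hγ (fun z ↦ ?_) hax.symm hxy y hby
    rcases hall z with rfl | rfl | rfl | rfl <;> simp

lemma nonempty_iso_bot_sum_K2_of_three_le_pdNum [Fintype V] (hV : Fintype.card V = 4)
    (hγ : 3 ≤ pdNum 1 G) (huv : G.Adj u v) :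
    Nonempty (G ≃g (⊥ : SimpleGraph (Fin 2)) ⊕g completeGraph (Fin 2)) := by
  obtain ⟨s, s', hd, hall⟩ := exists_nodup_of_card_eq_four hV huv.ne
  refine nonempty_iso_bot_sum_K2 hV (by simp at hd ⊢; tauto)
    (not_adj_of_three_le_pdNum hγ hall huv)
    (not_adj_of_three_le_pdNum (s := s') (s' := s) hγ (fun z ↦ ?_) huv) huv
  rcases hall z with h | h | h | h <;> simp [h]

lemma nonempty_iso_of_card_eq_four_of_two_le_pdNum [Fintype V] {S : Set V}
    (hV : Fintype.card V = 4) (hγ : 2 ≤ pdNum 1 G) (hS : S.ncard = 2)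
    (hdom : powerIter 1 G S 1 = Set.univ) :
    Nonempty (G ≃g completeGraph (Fin 1) ⊕g cycleGraph 3) ∨
      Nonempty (G ≃g completeGraph (Fin 1) ⊕g pathGraph 3) ∨
      Nonempty (G ≃g completeGraph (Fin 2) ⊕g completeGraph (Fin 2)) := by
  obtain ⟨a, b, hab, rfl⟩ := Set.ncard_eq_two.1 hS
  obtain ⟨x₁, x₂, hd, hall⟩ := exists_nodup_of_card_eq_four hV hab
  have hnbr : ∀ x, x ≠ a → x ≠ b → G.Adj a x ∨ G.Adj b x := fun x ha hb ↦ by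
    have hx : x ∈ powerIter 1 G {a, b} 1 := hdom ▸ Set.mem_univ x
    simpa [mem_powerIter_one_iff, ha, hb] using hx
  have hd' := hd
  simp only [List.nodup_cons, List.mem_cons, List.not_mem_nil, not_or, or_false,
    List.nodup_nil, and_true] at hd'
  obtain ⟨⟨-, ha₁, ha₂⟩, ⟨hb₁, hb₂⟩, h₁₂⟩ := hd'
  have hall' : ∀ {c d e f : V}, (∀ z, z = a ∨ z = b ∨ z = x₁ ∨ z = x₂ →
      z = c ∨ z = d ∨ z = e ∨ z = f) → ∀ z, z = c ∨ z = d ∨ z = e ∨ z = f :=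
    fun h z ↦ h z (hall z)
  rcases hnbr x₁ (Ne.symm ha₁) (Ne.symm hb₁) with h₁ | h₁ <;>
    rcases hnbr x₂ (Ne.symm ha₂) (Ne.symm hb₂) with h₂ | h₂
  · exact (nonempty_iso_of_adj_of_adj hV hγ (by simp at hd ⊢; tauto)
      (hall' (by tauto)) h₁ h₂).imp_right .inl
  · exact .inr (.inr (nonempty_iso_K2_sum_K2_of_adj_of_adj hV hγ (by simp at hd ⊢; tauto)
      (hall' (by tauto)) h₁ h₂))
  · exact .inr (.inr (nonempty_iso_K2_sum_K2_of_adj_of_adj hV hγ (by simp at hd ⊢; tauto)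
      (hall' (by tauto)) h₂ h₁))
  · exact (nonempty_iso_of_adj_of_adj hV hγ (by simp at hd ⊢; tauto)
      (hall' (by tauto)) h₁ h₂).imp_right .inl

end FourVertices

section PptAtLeastTwo

variable {V : Type*} {G : SimpleGraph V} {a b x₁ x₂ x₃ x₄ : V}

/-- The first two steps of the process of `S = {a, b}`: the domination step observes `x₁` and
`x₂`, and then `x₁` forces `x₃`. -/
structure FirstSteps (G : SimpleGraph V) (S : Set V) (a b x₁ x₂ x₃ : V) : Prop where
  nodup : [a, b, x₁, x₂, x₃].Nodup
  eq_pair : S = {a, b}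
  powerIter_one : powerIter 1 G S 1 = {a, b, x₁, x₂}
  powerIter_two : powerIter 1 G S 2 = {a, b, x₁, x₂, x₃}
  adj : G.Adj x₁ x₃
  neighbor_mem : ∀ y, G.Adj x₁ y → y ∈ powerIter 1 G S 2

lemma FirstSteps.swap {S : Set V} (h : FirstSteps G S a b x₁ x₂ x₃) :
    FirstSteps G S b a x₁ x₂ x₃ where
  nodup := by
    have := h.nodup
    simp only [List.nodup_cons, List.mem_cons, List.not_mem_nil] at this ⊢
    tauto
  eq_pair := by rw [h.eq_pair, Set.pair_comm]
  powerIter_one := by rw [h.powerIter_one, Set.insert_comm]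
  powerIter_two := by rw [h.powerIter_two, Set.insert_comm]
  adj := h.adj
  neighbor_mem := h.neighbor_mem

lemma FirstSteps.ncard_eq_two {S : Set V} (h : FirstSteps G S a b x₁ x₂ x₃) : S.ncard = 2 := by
  have hd := h.nodup
  simp only [List.nodup_cons, List.mem_cons, not_or] at hd
  rw [h.eq_pair, Set.ncard_pair hd.1.1]

lemma FirstSteps.adj_or_adj {S : Set V} {x : V} (hc : FirstSteps G S a b x₁ x₂ x₃)
    (hx : x = x₁ ∨ x = x₂) :
    G.Adj a x ∨ G.Adj b x := by
  have hd := hc.nodup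
  simp only [List.nodup_cons, List.mem_cons, List.not_mem_nil, not_or] at hd
  have hx₁ : x ∈ powerIter 1 G S 1 := by
    rw [hc.powerIter_one]
    rcases hx with rfl | rfl <;> simp
  rcases (mem_powerIter_one_iff.1 hx₁).resolve_left (by rw [hc.eq_pair]; rcases hx with rfl | rfl
    <;> simp [Ne.symm hd.1.2.1, Ne.symm hd.1.2.2.1, Ne.symm hd.2.1.1, Ne.symm hd.2.1.2.1]) with
    ⟨s, hs, hsx⟩
  rw [hc.eq_pair] at hs
  rcases hs with rfl | rfl
  exacts [.inl hsx, .inr hsx]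

lemma FirstSteps.neighbors {S : Set V} (hc : FirstSteps G S a b x₁ x₂ x₃) (ha₁ : ¬ G.Adj a x₁)
    (ha₂ : ¬ G.Adj a x₂) (hab : ¬ G.Adj a b) (h₁₂ : ¬ G.Adj x₁ x₂) :
    (∀ y, ¬ G.Adj a y) ∧ (∀ y, G.Adj b y → y = x₁ ∨ y = x₂) ∧
      ∀ y, G.Adj x₁ y → y = b ∨ y = x₃ := by
  have hS₁ : ∀ s ∈ S, ∀ y, G.Adj s y → y = a ∨ y = b ∨ y = x₁ ∨ y = x₂ := fun s hs y hy ↦ by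
    simpa [hc.powerIter_one] using mem_powerIter_one_of_adj (k := 1) hs hy
  have ha : ∀ y, ¬ G.Adj a y := fun y hy ↦ by
    rcases hS₁ a (by simp [hc.eq_pair]) y hy with h | h | h | h <;> subst y
    exacts [hy.ne rfl, hab hy, ha₁ hy, ha₂ hy]
  refine ⟨ha, fun y hy ↦ ?_, fun y hy ↦ ?_⟩
  · rcases hS₁ b (by simp [hc.eq_pair]) y hy with h | h | h | h <;> subst y
    exacts [(hab hy.symm).elim, (hy.ne rfl).elim, .inl rfl, .inr rfl]
  · have hy' := hc.neighbor_mem y hy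
    rw [hc.powerIter_two] at hy'
    rcases hy' with h | h | h | h | h <;> subst y
    exacts [(ha _ hy.symm).elim, .inl rfl, (hy.ne rfl).elim, (h₁₂ hy).elim, .inr rfl]

lemma subset_powerIter_two_of_adj_x₂ (hb₁ : G.Adj b x₁) (hb₂ : G.Adj b x₂)
    (hb : ∀ y, G.Adj b y → y = x₁ ∨ y = x₂) (h₂₃ : G.Adj x₂ x₃) (h₂₄ : G.Adj x₂ x₄) :
    insert x₄ {a, b, x₁, x₂, x₃} ⊆ powerIter 1 G {a, x₂} 2 := by
  have hT₁ : ∀ z, z = a ∨ z = x₂ ∨ z = b ∨ z = x₃ ∨ z = x₄ → z ∈ powerIter 1 G {a, x₂} 1 := by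
    rintro z (rfl | rfl | rfl | rfl | rfl)
    · exact subset_powerIter_one (by simp)
    · exact subset_powerIter_one (by simp)
    · exact mem_powerIter_one_of_adj (by simp) hb₂.symm
    · exact mem_powerIter_one_of_adj (by simp) h₂₃
    · exact mem_powerIter_one_of_adj (by simp) h₂₄
  have hx₁ : x₁ ∈ powerIter 1 G {a, x₂} 2 :=
    mem_powerIter_succ_of_forces one_ne_zero le_rfl (hT₁ b (by simp)) hb₁
      fun u hu hu' ↦ (hb u hu).resolve_right fun h ↦ hu' (hT₁ u (by simp [h]))
  intro z hz
  simp only [Set.mem_insert_iff, Set.mem_singleton_iff] at hz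
  by_cases hz₁ : z = x₁
  · exact hz₁ ▸ hx₁
  · exact powerIter_subset_succ 1 (hT₁ z (by tauto))

lemma subset_powerIter_two_of_adj_x₃ (hb₁ : G.Adj b x₁) (h₁ : ∀ y, G.Adj x₁ y → y = b ∨ y = x₃)
    (h₁₃ : G.Adj x₁ x₃) (h₂₃ : G.Adj x₂ x₃) (h₃₄ : G.Adj x₃ x₄) :
    insert x₄ {a, b, x₁, x₂, x₃} ⊆ powerIter 1 G {a, x₃} 2 := by
  have hT₁ : ∀ z, z = a ∨ z = x₃ ∨ z = x₁ ∨ z = x₂ ∨ z = x₄ → z ∈ powerIter 1 G {a, x₃} 1 := by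
    rintro z (rfl | rfl | rfl | rfl | rfl)
    · exact subset_powerIter_one (by simp)
    · exact subset_powerIter_one (by simp)
    · exact mem_powerIter_one_of_adj (by simp) h₁₃.symm
    · exact mem_powerIter_one_of_adj (by simp) h₂₃.symm
    · exact mem_powerIter_one_of_adj (by simp) h₃₄
  have hb' : b ∈ powerIter 1 G {a, x₃} 2 :=
    mem_powerIter_succ_of_forces one_ne_zero le_rfl (hT₁ x₁ (by simp)) hb₁.symm
      fun u hu hu' ↦ (h₁ u hu).resolve_right fun h ↦ hu' (hT₁ u (by simp [h]))
  intro z hz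
  simp only [Set.mem_insert_iff, Set.mem_singleton_iff] at hz
  by_cases hzb : z = b
  · exact hzb ▸ hb'
  · exact powerIter_subset_succ 1 (hT₁ z (by tauto))

lemma subset_powerIter_two_of_adj_x₁ (hb₁ : G.Adj b x₁) (hb₂ : G.Adj b x₂)
    (hb : ∀ y, G.Adj b y → y = x₁ ∨ y = x₂) (h₁₃ : G.Adj x₁ x₃) (h₃₄ : G.Adj x₃ x₄)
    (h₃ : ∀ y, G.Adj x₃ y → y = x₁ ∨ y = x₄) :
    insert x₄ {a, b, x₁, x₂, x₃} ⊆ powerIter 1 G {a, x₁} 2 := by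
  have hT₁ : ∀ z, z = a ∨ z = x₁ ∨ z = b ∨ z = x₃ → z ∈ powerIter 1 G {a, x₁} 1 := by
    rintro z (rfl | rfl | rfl | rfl)
    · exact subset_powerIter_one (by simp)
    · exact subset_powerIter_one (by simp)
    · exact mem_powerIter_one_of_adj (by simp) hb₁.symm
    · exact mem_powerIter_one_of_adj (by simp) h₁₃
  have hx₂ : x₂ ∈ powerIter 1 G {a, x₁} 2 :=
    mem_powerIter_succ_of_forces one_ne_zero le_rfl (hT₁ b (by simp)) hb₂
      fun u hu hu' ↦ (hb u hu).resolve_left fun h ↦ hu' (hT₁ u (by simp [h]))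
  have hx₄ : x₄ ∈ powerIter 1 G {a, x₁} 2 :=
    mem_powerIter_succ_of_forces one_ne_zero le_rfl (hT₁ x₃ (by simp)) h₃₄
      fun u hu hu' ↦ (h₃ u hu).resolve_left fun h ↦ hu' (hT₁ u (by simp [h]))
  intro z hz
  simp only [Set.mem_insert_iff, Set.mem_singleton_iff] at hz
  by_cases hz₂ : z = x₂
  · exact hz₂ ▸ hx₂
  by_cases hz₄ : z = x₄
  · exact hz₄ ▸ hx₄
  exact powerIter_subset_succ 1 (hT₁ z (by tauto))

variable [Fintype V] {S : Set V}

lemma exists_firstSteps (hr : 2 ≤ ppt 1 G) (hS2 : S.ncard = 2)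
    (hcount : ∀ t, 1 ≤ t → t ≤ ppt 1 G → (powerIter 1 G S t).ncard = t + 3) :
    ∃ a b x₁ x₂ x₃, FirstSteps G S a b x₁ x₂ x₃ := by
  obtain ⟨a, b, hab, hSab⟩ := Set.ncard_eq_two.1 hS2
  obtain ⟨x₁, x₂, hx₁₂, hdiff⟩ := Set.ncard_eq_two.1 (show (powerIter 1 G S 1 \ S).ncard = 2 by
    rw [Set.ncard_sdiff subset_powerIter_one, hcount 1 le_rfl (by omega), hS2])
  have hx₁ : x₁ ∈ powerIter 1 G S 1 \ S := hdiff ▸ by simp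
  have hx₂ : x₂ ∈ powerIter 1 G S 1 \ S := hdiff ▸ by simp
  have hP₁ : powerIter 1 G S 1 = {a, b, x₁, x₂} := by
    rw [← Set.union_sdiff_cancel (subset_powerIter_one (S := S)), hdiff, hSab]
    ext
    simp only [Set.mem_union, Set.mem_insert_iff, Set.mem_singleton_iff]
    tauto
  obtain ⟨x₃, hx₃, hP₂⟩ : ∃ x₃ ∉ powerIter 1 G S 1,
      insert x₃ (powerIter 1 G S 1) = powerIter 1 G S 2 :=
    (Set.exists_eq_insert_iff_ncard).2 ⟨powerIter_subset_succ 1,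
      by rw [hcount 1 le_rfl (by omega), hcount 2 (by omega) hr]⟩
  obtain ⟨v, hv, hvx₃, hforce⟩ :=
    exists_forces_of_mem_powerIter_succ one_ne_zero (hP₂ ▸ Set.mem_insert _ _) hx₃
  have hNv : ∀ y, G.Adj v y → y ∈ powerIter 1 G S 2 := fun y hy ↦ by
    by_cases h : y ∈ powerIter 1 G S 1
    · exact powerIter_subset_succ 1 h
    · rw [← hP₂, hforce y hy h]
      exact Set.mem_insert _ _
  have hv' : v ∈ powerIter 1 G S 1 \ S := ⟨hv, fun h ↦ hx₃ (mem_powerIter_one_of_adj h hvx₃)⟩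
  rw [hP₁] at hx₃
  rw [hSab] at hx₁ hx₂
  rw [hdiff] at hv'
  have hd : [a, b, x₁, x₂, x₃].Nodup := by
    simp only [Set.mem_sdiff, Set.mem_insert_iff, Set.mem_singleton_iff, not_or] at hx₁ hx₂ hx₃
    simp_all [eq_comm]
  have hP₂' : ∀ y₁ y₂, ({y₁, y₂} : Set V) = {x₁, x₂} →
      powerIter 1 G S 2 = {a, b, y₁, y₂, x₃} := fun y₁ y₂ hy ↦ by
    rw [← hP₂, hP₁, ← hy]
    ext
    simp only [Set.mem_insert_iff, Set.mem_singleton_iff]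
    tauto
  rcases hv' with h | h <;> subst v
  · exact ⟨a, b, x₁, x₂, x₃, hd, hSab, hP₁, hP₂' x₁ x₂ rfl, hvx₃, hNv⟩
  · refine ⟨a, b, x₂, x₁, x₃, ?_, hSab, ?_, hP₂' x₂ x₁ (Set.pair_comm _ _), hvx₃, hNv⟩
    · simp only [List.nodup_cons, List.mem_cons, List.not_mem_nil] at hd ⊢
      tauto
    · rw [hP₁, Set.pair_comm x₁]

lemma IsOptimalPDS.not_adj_of_adj (hS : IsOptimalPDS 1 G S) (hr : 2 ≤ ppt 1 G)
    (hc : FirstSteps G S a b x₁ x₂ x₃) (ha : G.Adj a x₁ ∨ G.Adj a x₂) :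
    ¬ (G.Adj b x₁ ∨ G.Adj b x₂) := fun hb ↦ by
  have hx₁₂ : x₁ ≠ x₂ := by
    have hd := hc.nodup
    simp only [List.nodup_cons, List.mem_cons, not_or] at hd
    exact hd.2.2.1.1
  refine hS.not_powerIter_succ_subset (T := {x₁, x₂})
    (by rw [Set.ncard_pair hx₁₂, hc.ncard_eq_two]) one_ne_zero (by omega) ?_
  have hx : ∀ y, G.Adj y x₁ ∨ G.Adj y x₂ → y ∈ powerIter 1 G {x₁, x₂} 1 := fun y hy ↦
    hy.elim (mem_powerIter_one_of_adj (by simp) ·.symm) (mem_powerIter_one_of_adj (by simp) ·.symm)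
  rw [hc.powerIter_two]
  intro z hz
  simp only [Set.mem_insert_iff, Set.mem_singleton_iff] at hz
  rcases hz with h | h | h | h | h <;> subst z
  · exact hx a ha
  · exact hx b hb
  · exact subset_powerIter_one (by simp)
  · exact subset_powerIter_one (by simp)
  · exact mem_powerIter_one_of_adj (by simp) hc.adj

/-- If `ab` resp. `x₁x₂` were an edge, `{b, x₁}` resp. `{a, x₁}` would dominate `S^[2]`. -/
lemma IsOptimalPDS.neighbors_of_not_adj (hS : IsOptimalPDS 1 G S) (hr : 2 ≤ ppt 1 G)
    (hc : FirstSteps G S a b x₁ x₂ x₃) (ha : ¬ (G.Adj a x₁ ∨ G.Adj a x₂)) :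
    (∀ y, ¬ G.Adj a y) ∧ G.Adj b x₁ ∧ G.Adj b x₂ ∧ (∀ y, G.Adj b y → y = x₁ ∨ y = x₂) ∧
      ∀ y, G.Adj x₁ y → y = b ∨ y = x₃ := by
  have hd := hc.nodup
  simp only [List.nodup_cons, List.mem_cons, List.not_mem_nil, not_or] at hd
  have hb₁ : G.Adj b x₁ := (hc.adj_or_adj (.inl rfl)).resolve_left fun h ↦ ha (.inl h)
  have hb₂ : G.Adj b x₂ := (hc.adj_or_adj (.inr rfl)).resolve_left fun h ↦ ha (.inr h)
  have hab : ¬ G.Adj a b := fun h ↦ by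
    refine hS.not_powerIter_succ_subset (T := {b, x₁})
      (by rw [Set.ncard_pair hd.2.1.1, hc.ncard_eq_two]) one_ne_zero (by omega) ?_
    rw [hc.powerIter_two]
    intro z hz
    simp only [Set.mem_insert_iff, Set.mem_singleton_iff] at hz
    rcases hz with h' | h' | h' | h' | h' <;> subst z
    · exact mem_powerIter_one_of_adj (by simp) h.symm
    · exact subset_powerIter_one (by simp)
    · exact subset_powerIter_one (by simp)
    · exact mem_powerIter_one_of_adj (by simp) hb₂
    · exact mem_powerIter_one_of_adj (by simp) hc.adj
  have h₁₂ : ¬ G.Adj x₁ x₂ := fun h ↦ by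
    refine hS.not_powerIter_succ_subset (T := {a, x₁})
      (by rw [Set.ncard_pair hd.1.2.1, hc.ncard_eq_two]) one_ne_zero (by omega) ?_
    rw [hc.powerIter_two]
    intro z hz
    simp only [Set.mem_insert_iff, Set.mem_singleton_iff] at hz
    rcases hz with h' | h' | h' | h' | h' <;> subst z
    · exact subset_powerIter_one (by simp)
    · exact mem_powerIter_one_of_adj (by simp) hb₁.symm
    · exact subset_powerIter_one (by simp)
    · exact mem_powerIter_one_of_adj (by simp) h
    · exact mem_powerIter_one_of_adj (by simp) hc.adj
  obtain ⟨ha', hb, h₁⟩ := hc.neighbors (fun h ↦ ha (.inl h)) (fun h ↦ ha (.inr h)) hab h₁₂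
  exact ⟨ha', hb₁, hb₂, hb, h₁⟩

/-- Whichever vertex forces the vertex `x₄` observed at step 3, one of `{a, x₁}`, `{a, x₂}`,
`{a, x₃}` runs one step ahead of `S`. -/
lemma IsOptimalPDS.ppt_le_two (hS : IsOptimalPDS 1 G S)
    (hcount : ∀ t, 1 ≤ t → t ≤ ppt 1 G → (powerIter 1 G S t).ncard = t + 3)
    (hc : FirstSteps G S a b x₁ x₂ x₃)
    (ha : ∀ y, ¬ G.Adj a y) (hb₁ : G.Adj b x₁) (hb₂ : G.Adj b x₂)
    (hb : ∀ y, G.Adj b y → y = x₁ ∨ y = x₂) (h₁ : ∀ y, G.Adj x₁ y → y = b ∨ y = x₃) :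
    ppt 1 G ≤ 2 := by
  by_contra! hr
  have hd := hc.nodup
  simp only [List.nodup_cons, List.mem_cons, List.not_mem_nil, not_or, or_false,
    List.nodup_nil, and_true] at hd
  obtain ⟨⟨hab, ha₁, ha₂, ha₃⟩, ⟨hb₁', hb₂', hb₃⟩, ⟨h₁₂', h₁₃'⟩, h₂₃'⟩ := hd
  obtain ⟨x₄, hx₄, hP₃⟩ : ∃ x₄ ∉ powerIter 1 G S 2,
      insert x₄ (powerIter 1 G S 2) = powerIter 1 G S 3 :=
    (Set.exists_eq_insert_iff_ncard).2
      ⟨powerIter_subset_succ 2, by rw [hcount 2 (by omega) (by omega), hcount 3 (by omega) hr]⟩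
  obtain ⟨v, hv, hvx₄, hforce⟩ :=
    exists_forces_of_mem_powerIter_succ two_ne_zero (hP₃ ▸ Set.mem_insert _ _) hx₄
  have hx₄' : x₄ ∉ ({a, b, x₁, x₂, x₃} : Set V) := hc.powerIter_two ▸ hx₄
  simp only [Set.mem_insert_iff, Set.mem_singleton_iff, not_or] at hx₄'
  have hexch : ∀ y, y ≠ a → ¬ insert x₄ {a, b, x₁, x₂, x₃} ⊆ powerIter 1 G {a, y} 2 :=
    fun y hy h ↦ hS.not_powerIter_succ_subset (by rw [Set.ncard_pair hy.symm, hc.ncard_eq_two])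
      two_ne_zero hr (by rwa [← hP₃, hc.powerIter_two])
  rw [hc.powerIter_two] at hv
  rcases hv with h | h | h | h | h <;> subst v
  · exact ha _ hvx₄
  · rcases hb _ hvx₄ with rfl | rfl <;> simp_all
  · rcases h₁ _ hvx₄ with rfl | rfl <;> simp_all
  · have h₂₃ : G.Adj x₂ x₃ := adj_of_forces_of_notMem one_ne_zero (by simp [hc.powerIter_one])
      hvx₄ hx₄ (by rw [hc.powerIter_two, hc.powerIter_one]; ext; simp; tauto) hforce
    exact hexch x₂ (Ne.symm ha₂) (subset_powerIter_two_of_adj_x₂ hb₁ hb₂ hb h₂₃ hvx₄)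
  · by_cases h₂₃ : G.Adj x₂ x₃
    · exact hexch x₃ (Ne.symm ha₃) (subset_powerIter_two_of_adj_x₃ hb₁ h₁ hc.adj h₂₃ hvx₄)
    refine hexch x₁ (Ne.symm ha₁)
      (subset_powerIter_two_of_adj_x₁ hb₁ hb₂ hb hc.adj hvx₄ fun u hu ↦ ?_)
    by_contra! hu'
    refine hu'.2 (hforce u hu ?_)
    rw [hc.powerIter_two]
    rintro (rfl | rfl | rfl | rfl | rfl)
    · exact ha _ hu.symm
    · rcases hb _ hu.symm with h | h <;> simp_all
    · exact hu'.1 rfl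
    · exact h₂₃ hu.symm
    · exact hu.ne rfl

lemma IsOptimalPDS.nonempty_iso_of_two_le_ppt (hS : IsOptimalPDS 1 G S) (hr : 2 ≤ ppt 1 G)
    (hS2 : S.ncard = 2) (hV : Fintype.card V = ppt 1 G + 3) :
    Nonempty (G ≃g completeGraph (Fin 1) ⊕g pathGraph 4) ∨
      Nonempty (G ≃g completeGraph (Fin 1) ⊕g cycleGraph 4) := by
  have hcount : ∀ t, 1 ≤ t → t ≤ ppt 1 G → (powerIter 1 G S t).ncard = t + 3 :=
    fun t ht htr ↦ by
      rw [hS.ncard_powerIter_eq hr (by rw [Nat.card_eq_fintype_card, hV, hS2]; ring) ht htr, hS2]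
      ring
  obtain ⟨a, b, x₁, x₂, x₃, hc⟩ := exists_firstSteps hr hS2 hcount
  wlog ha : ¬ (G.Adj a x₁ ∨ G.Adj a x₂) generalizing a b with H
  · exact H b a hc.swap (hS.not_adj_of_adj hr hc (not_not.1 ha))
  obtain ⟨ha', hb₁, hb₂, hb, h₁⟩ := hS.neighbors_of_not_adj hr hc ha
  have hV5 : Fintype.card V = 5 := by
    have := hS.ppt_le_two hcount hc ha' hb₁ hb₂ hb h₁
    omega
  have hd := hc.nodup
  have hb₃ : ¬ G.Adj b x₃ := fun h ↦ by
    rcases hb _ h with h | h <;> simp_all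
  have h₁₂ : ¬ G.Adj x₁ x₂ := fun h ↦ by
    rcases h₁ _ h with h | h <;> simp_all
  by_cases h₂₃ : G.Adj x₂ x₃
  · exact .inr (nonempty_iso_K1_sum_cycleGraph_four hV5 (by simp_all [eq_comm]) ha' hb₁ hc.adj
      h₂₃.symm hb₂.symm hb₃ h₁₂)
  · exact .inl (nonempty_iso_K1_sum_pathGraph_four hV5 (by simp_all [eq_comm]) ha' hb₂.symm hb₁
      hc.adj (fun h ↦ h₁₂ h.symm) h₂₃ hb₃)

end PptAtLeastTwo

end PowerProp

open SimpleGraph PowerProp in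
/-- If `ppt(G) = |G| - 3` and `γ_P(G) ∈ {2,3}`, then `G` is one of the listed graphs. -/
theorem ppt_eq_card_sub_three_of_pdNum {V : Type*} [Fintype V]
    (G : SimpleGraph V)
    (h : (ppt 1 G : ℤ) = (Fintype.card V : ℤ) - 3)
    (hγ : pdNum 1 G = 2 ∨ pdNum 1 G = 3) :
    Nonempty (G ≃g (⊥ : SimpleGraph (Fin 3))) ∨
    Nonempty (G ≃g (⊥ : SimpleGraph (Fin 2)) ⊕g completeGraph (Fin 2)) ∨
    Nonempty (G ≃g completeGraph (Fin 1) ⊕g cycleGraph 3) ∨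
    Nonempty (G ≃g completeGraph (Fin 1) ⊕g pathGraph 3) ∨
    Nonempty (G ≃g completeGraph (Fin 1) ⊕g pathGraph 4) ∨
    Nonempty (G ≃g completeGraph (Fin 1) ⊕g cycleGraph 4) ∨
    Nonempty (G ≃g completeGraph (Fin 2) ⊕g completeGraph (Fin 2)) := by
  obtain ⟨S, hS⟩ := exists_isOptimalPDS 1 G
  have hn : Fintype.card V = ppt 1 G + 3 := by omega
  have hSγ : S.ncard = pdNum 1 G := hS.1.2
  rcases Nat.lt_or_ge (ppt 1 G) 2 with hr | hr
  · interval_cases hr' : ppt 1 G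
    · exact .inl (nonempty_iso_bot_of_forall_not_adj hn (hS.not_adj_of_ppt_eq_zero hr'))
    have hdom : powerIter 1 G S 1 = Set.univ := by
      have := hS.powerIter_ppt
      rwa [hr'] at this
    rcases hγ with hγ | hγ
    · rcases nonempty_iso_of_card_eq_four_of_two_le_pdNum hn hγ.ge (hSγ.trans hγ) hdom
        with h | h | h
      exacts [.inr (.inr (.inl h)), .inr (.inr (.inr (.inl h))),
        .inr (.inr (.inr (.inr (.inr (.inr h)))))]
    · obtain ⟨x, hx⟩ : ∃ x, x ∉ S := by
        by_contra! hS'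
        rw [Set.eq_univ_of_forall hS', Set.ncard_univ, Nat.card_eq_fintype_card] at hSγ
        omega
      obtain ⟨s, -, hsx⟩ := (mem_powerIter_one_iff.1 (hdom ▸ Set.mem_univ x)).resolve_left hx
      exact .inr (.inl (nonempty_iso_bot_sum_K2_of_three_le_pdNum hn hγ.ge hsx))
  · have hS2 : S.ncard = 2 := by
      have := hS.ncard_add_ppt_lt_card hr
      rw [Nat.card_eq_fintype_card] at this
      omega
    rcases hS.nonempty_iso_of_two_le_ppt hr hS2 hn with h | h
    exacts [.inr (.inr (.inr (.inr (.inl h)))), .inr (.inr (.inr (.inr (.inr (.inl h)))))]
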